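/- arXiv:2405.05276 — 4 statements merged into one kernel-verified Lean document; each statement's English description precedes it below -/
import Mathlib

section
/- For a metric space (B,d), a function f : B → ℝ is the radial limit of some continuous function f̄ : B × ℝ_{>0} → ℝ (i.e. f(b) = lim_{t→0⁺} f̄(b,t) for every b ∈ B) if and only if f is a pointwise limit of a sequence of continuous functions B → ℝ. -/
/-!
Restricting `f̄` to the slices `t = 1 / (n + 1)` gives a sequence of continuous functions
converging to `f`. Conversely, interpolate a sequence `gₙ → f` linearly in the radial variable,
`f̄(b, t) = (1 - θ) g_⌊1/t⌋(b) + θ g_(⌊1/t⌋+1)(b)` with `θ` the fractional part of `1/t`: the pieces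
glue continuously along the locally finite cover by slabs `B × [k, k + 1]`, and as `t → 0⁺` the
value is a convex combination of two terms of the sequence with index tending to infinity.
-/

open Filter Topology Set

section LinearInterpolation

variable {X E : Type*} [NormedAddCommGroup E] [NormedSpace ℝ E]

noncomputable def linearInterp (G : ℤ → X → E) (p : X × ℝ) : E :=
  (1 - Int.fract p.2) • G ⌊p.2⌋ p.1 + Int.fract p.2 • G (⌊p.2⌋ + 1) p.1

lemma linearInterp_eq_of_mem_Icc (G : ℤ → X → E) {k : ℤ} {p : X × ℝ}
    (hp : p.2 ∈ Icc (k : ℝ) (k + 1)) :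
    linearInterp G p = (1 - (p.2 - k)) • G k p.1 + (p.2 - k) • G (k + 1) p.1 := by
  obtain ⟨hk, hk1⟩ := hp
  rcases hk1.lt_or_eq with hlt | heq
  · have hfloor : ⌊p.2⌋ = k := Int.floor_eq_iff.mpr ⟨hk, hlt⟩
    simp [linearInterp, ← Int.self_sub_floor, hfloor]
  · simp [linearInterp, ← Int.self_sub_floor, heq]

lemma continuous_linearInterp [TopologicalSpace X] {G : ℤ → X → E}
    (hG : ∀ k, Continuous (G k)) : Continuous (linearInterp G) := by
  have hfin : LocallyFinite fun k : ℤ => (univ : Set X) ×ˢ Icc (k : ℝ) (k + 1) :=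
    (locallyFinite_Icc_of_tendsto tendsto_intCast_atTop_atTop
      (tendsto_atBot_add_const_right _ 1 (tendsto_intCast_atBot_iff.mpr tendsto_id))).prod_left _
  refine hfin.continuous (by simp [← prod_iUnion, iUnion_Icc_intCast])
    (fun k => isClosed_univ.prod isClosed_Icc) fun k => ?_
  have hpiece : Continuous fun p : X × ℝ =>
      (1 - (p.2 - k)) • G k p.1 + (p.2 - k) • G (k + 1) p.1 := by
    fun_prop
  exact hpiece.continuousOn.congr fun p hp => linearInterp_eq_of_mem_Icc G hp.2

lemma tendsto_linearInterp_atTop {G : ℤ → X → E} {x : X} {y : E}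
    (hG : Tendsto (fun k => G k x) atTop (𝓝 y)) :
    Tendsto (fun s : ℝ => linearInterp G (x, s)) atTop (𝓝 y) := by
  rw [Metric.tendsto_nhds] at hG ⊢
  intro ε hε
  have hnext : Tendsto (fun s : ℝ => ⌊s⌋ + 1) atTop atTop :=
    tendsto_atTop_add_const_right _ 1 tendsto_floor_atTop
  filter_upwards [tendsto_floor_atTop.eventually (hG ε hε), hnext.eventually (hG ε hε)]
    with s hfloor hnext
  exact convex_ball y ε hfloor hnext (sub_nonneg.mpr (Int.fract_lt_one s).le)
    (Int.fract_nonneg s) (sub_add_cancel 1 _)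

end LinearInterpolation

/-- For a metric space `B`, a function `f : B → ℝ` is the radial limit of some continuous
function on `B × ℝ_{>0}` iff it is a pointwise limit of a sequence of continuous functions. -/
theorem radial_limit_iff_pointwise_limit_of_continuous
    {B : Type*} [MetricSpace B] (f : B → ℝ) :
    (∃ fbar : B × ℝ → ℝ, ContinuousOn fbar (Set.univ ×ˢ Set.Ioi (0 : ℝ)) ∧
      ∀ b : B, Tendsto (fun t => fbar (b, t)) (nhdsWithin 0 (Set.Ioi (0 : ℝ))) (nhds (f b))) ↔
    (∃ g : ℕ → B → ℝ, (∀ n, Continuous (g n)) ∧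
      ∀ b : B, Tendsto (fun n => g n b) atTop (nhds (f b))) := by
  constructor
  · rintro ⟨fbar, hcont, hlim⟩
    have hslice : Tendsto (fun n : ℕ => ((n : ℝ) + 1)⁻¹) atTop (𝓝[>] 0) :=
      tendsto_inv_atTop_nhdsGT_zero.comp
        (tendsto_atTop_add_const_right _ 1 tendsto_natCast_atTop_atTop)
    refine ⟨fun n b => fbar (b, ((n : ℝ) + 1)⁻¹), fun n => ?_, fun b => (hlim b).comp hslice⟩
    exact hcont.comp_continuous (continuous_id.prodMk continuous_const)
      fun _ => ⟨trivial, mem_Ioi.mpr Nat.inv_pos_of_nat⟩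
  · rintro ⟨g, hgc, hgl⟩
    have htoNat : Tendsto Int.toNat atTop atTop :=
      tendsto_atTop_atTop.mpr fun n => ⟨n, fun k hk => by omega⟩
    refine ⟨fun p => linearInterp (fun k => g k.toNat) (p.1, p.2⁻¹), ?_, fun b => ?_⟩
    · exact (continuous_linearInterp fun k => hgc k.toNat).comp_continuousOn
        (continuousOn_fst.prodMk (continuousOn_snd.inv₀ fun p hp => hp.2.ne'))
    · exact (tendsto_linearInterp_atTop ((hgl b).comp htoNat)).comp tendsto_inv_nhdsGT_zero
end

section
/- Let (B,d) be a metric space, φ a gauge (continuous, φ(0)=0, nonnegative), and (f_n) a sequence of continuous functions B → ℝ that φ'-converges to f : B → ℝ for some gauge φ' satisfying min over [1/(n+1), 1/n] of φ' > max over [1/(n+1), 1/n] of φ for all sufficiently large n. Then the piecewise-linear interpolation f̄ : B × ℝ_{>0} → ℝ given by f̄(b, s/(n+1) + (1−s)/n) = s·f_{n+1}(b) + (1−s)·f_n(b) for s ∈ [0,1] is continuous and has φ-boundary-limit f, i.e. for every b ∈ B, f̄(b',t) → f(b) as (b',t) → (b,0) subject to d(b,b') ≤ φ(t). -/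
/-!
On the strip `1/(n+1) ≤ t ≤ 1/n` the interpolation is a convex combination of `f_n` and
`f_{n+1}` whose weight depends continuously on `t`, so `f̄` is continuous on every closed strip;
near a point with `t > 0` only finitely many strips meet, which gives continuity on `B × (0, 1]`.
If `t` is small then `t` lies in a strip with large `n`, where `φ t < φ' (1/n)` and
`φ t < φ' (1/(n+1))`; so `d(b, b') ≤ φ t` puts both `f_n b'` and `f_{n+1} b'` close to `f b` by
φ'-convergence, and with them their convex combination `f̄ (b', t)`.
-/

open Filter Topology Set

lemma one_le_floor_one_div {t : ℝ} (ht : 0 < t) (ht1 : t ≤ 1) : 1 ≤ ⌊1 / t⌋₊ :=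
  Nat.le_floor <| by rw [Nat.cast_one, le_one_div one_pos ht, div_one]; exact ht1

lemma one_div_floor_one_div_add_one_lt {t : ℝ} (ht : 0 < t) : 1 / (⌊1 / t⌋₊ + 1 : ℝ) < t :=
  (one_div_lt (by positivity) ht).2 (Nat.lt_floor_add_one _)

lemma le_one_div_floor_one_div {t : ℝ} (ht : 0 < t) (ht1 : t ≤ 1) : t ≤ 1 / (⌊1 / t⌋₊ : ℝ) :=
  (le_one_div ht (by exact_mod_cast one_le_floor_one_div ht ht1)).2 (Nat.floor_le (by positivity))

lemma mem_Icc_one_div_floor_one_div {t : ℝ} (ht : 0 < t) (ht1 : t ≤ 1) :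
    t ∈ Icc (1 / (⌊1 / t⌋₊ + 1 : ℝ)) (1 / ⌊1 / t⌋₊) :=
  ⟨(one_div_floor_one_div_add_one_lt ht).le, le_one_div_floor_one_div ht ht1⟩

lemma continuousOn_univ_prod_Ioc_of_strips {X Y : Type*} [TopologicalSpace X]
    [TopologicalSpace Y] {F : X × ℝ → Y}
    (hF : ∀ n : ℕ, 1 ≤ n → ContinuousOn F (univ ×ˢ Icc (1 / (n + 1 : ℝ)) (1 / n))) :
    ContinuousOn F (univ ×ˢ Ioc 0 1) := by
  rintro ⟨x, t⟩ ⟨-, ht, ht1⟩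
  set N := ⌊1 / t⌋₊
  have hU : (univ : Set X) ×ˢ Ioi (1 / (N + 1 : ℝ)) ∈ 𝓝 (x, t) :=
    (isOpen_univ.prod isOpen_Ioi).mem_nhds ⟨mem_univ x, one_div_floor_one_div_add_one_lt ht⟩
  have hcover : (univ : Set X) ×ˢ Ioc 0 1 ∩ univ ×ˢ Ioi (1 / (N + 1 : ℝ)) ⊆
      ⋃ n : Icc 1 N, (univ : Set X) ×ˢ Icc (1 / (n + 1 : ℝ)) (1 / n) := by
    rintro ⟨x', t'⟩ ⟨⟨-, ht', ht'1⟩, -, hNt'⟩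
    have hle : ⌊1 / t'⌋₊ ≤ N := by
      refine Nat.le_of_lt_succ (Nat.floor_lt (by positivity) |>.2 ?_)
      push_cast
      exact (one_div_lt ht' (by positivity : (0 : ℝ) < N + 1)).2 hNt'
    exact mem_iUnion.2 ⟨⟨_, one_le_floor_one_div ht' ht'1, hle⟩,
      mem_univ x', mem_Icc_one_div_floor_one_div ht' ht'1⟩
  have hcont := (locallyFinite_of_finite _).continuousOn_iUnion
    (fun n : Icc 1 N => isClosed_univ.prod isClosed_Icc) (fun n => hF n n.2.1)
  rw [← continuousWithinAt_inter hU]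
  exact (hcont _ (hcover ⟨⟨mem_univ x, ht, ht1⟩, mem_of_mem_nhds hU⟩)).mono hcover

/-- The parameter `s` with `t = s / (n + 1) + (1 - s) / n`. -/
def stripWeight (n : ℕ) (t : ℝ) : ℝ := (n + 1) * (1 - n * t)

lemma continuous_stripWeight (n : ℕ) : Continuous (stripWeight n) := by
  unfold stripWeight; fun_prop

lemma stripWeight_div_add {n : ℕ} (hn : n ≠ 0) (t : ℝ) :
    stripWeight n t / (n + 1) + (1 - stripWeight n t) / n = t := by
  unfold stripWeight; field_simp; ring

lemma stripWeight_mem_Icc {n : ℕ} (hn : n ≠ 0) {t : ℝ}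
    (ht : t ∈ Icc (1 / (n + 1 : ℝ)) (1 / n)) : stripWeight n t ∈ Icc 0 1 := by
  have hn0 : (0 : ℝ) < n := by positivity
  obtain ⟨hlo, hhi⟩ := ht
  rw [div_le_iff₀ (by positivity)] at hlo
  rw [le_div_iff₀ hn0] at hhi
  unfold stripWeight
  constructor <;> nlinarith

lemma eq_stripWeight_of_interp {F : ℝ → ℝ} {u v : ℝ} {n : ℕ} (hn : n ≠ 0)
    (hF : ∀ s ∈ Icc (0 : ℝ) 1, F (s / (n + 1) + (1 - s) / n) = s * u + (1 - s) * v)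
    {t : ℝ} (ht : t ∈ Icc (1 / (n + 1 : ℝ)) (1 / n)) :
    F t = stripWeight n t * u + (1 - stripWeight n t) * v := by
  rw [← hF _ (stripWeight_mem_Icc hn ht), stripWeight_div_add hn]

lemma abs_stripWeight_mul_add_sub_lt {n : ℕ} (hn : n ≠ 0) {t : ℝ}
    (ht : t ∈ Icc (1 / (n + 1 : ℝ)) (1 / n)) {u v c η : ℝ} (hu : |u - c| < η) (hv : |v - c| < η) :
    |stripWeight n t * u + (1 - stripWeight n t) * v - c| < η := by
  obtain ⟨hw₀, hw₁⟩ := stripWeight_mem_Icc hn ht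
  rw [← Real.dist_eq, ← Metric.mem_ball] at hu hv ⊢
  exact convex_ball c η hu hv hw₀ (sub_nonneg.2 hw₁) (add_sub_cancel _ _)

theorem interpolation_continuous_and_phi_boundary_limit_general
    {B : Type*} [MetricSpace B] (f : B → ℝ) (fseq : ℕ → B → ℝ)
    (φ φ' : ℝ → ℝ)
    (hcont : ∀ n, Continuous (fseq n))
    (hminmax : ∃ N : ℕ, ∀ n : ℕ, N ≤ n →
      ∀ t ∈ Set.Icc (1 / ((n : ℝ) + 1)) (1 / (n : ℝ)),
      ∀ t' ∈ Set.Icc (1 / ((n : ℝ) + 1)) (1 / (n : ℝ)), φ t < φ' t')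
    (hφ'conv : ∀ b : B, ∀ η : ℝ, 0 < η → ∃ N : ℕ, ∀ n : ℕ, N ≤ n →
      ∀ b' : B, dist b b' ≤ φ' (1 / n) → |fseq n b' - f b| < η)
    (fbar : B × ℝ → ℝ)
    (hinterp : ∀ b : B, ∀ n : ℕ, 1 ≤ n → ∀ s ∈ Set.Icc (0 : ℝ) 1,
      fbar (b, s / ((n : ℝ) + 1) + (1 - s) / (n : ℝ)) =
        s * fseq (n + 1) b + (1 - s) * fseq n b) :
    ContinuousOn fbar (Set.univ ×ˢ Set.Ioc (0 : ℝ) 1) ∧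
    ∀ b : B, ∀ η : ℝ, 0 < η → ∃ δ : ℝ, 0 < δ ∧ ∀ (b' : B) (t : ℝ),
      0 < t → t < δ → dist b b' ≤ φ t → |fbar (b', t) - f b| < η := by
  have hstrip : ∀ n : ℕ, 1 ≤ n → ∀ b t, t ∈ Icc (1 / (n + 1 : ℝ)) (1 / n) →
      fbar (b, t) = stripWeight n t * fseq (n + 1) b + (1 - stripWeight n t) * fseq n b :=
    fun n hn b _ ht => eq_stripWeight_of_interp (F := fun t => fbar (b, t)) (by omega)
      (hinterp b n hn) ht
  refine ⟨continuousOn_univ_prod_Ioc_of_strips fun n hn => ?_, fun b η hη => ?_⟩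
  · refine ContinuousOn.congr (f := fun p : B × ℝ => stripWeight n p.2 * fseq (n + 1) p.1 +
      (1 - stripWeight n p.2) * fseq n p.1) ?_ fun p hp => hstrip n hn p.1 p.2 hp.2
    have := continuous_stripWeight n
    fun_prop
  obtain ⟨N₀, hN₀⟩ := hminmax
  obtain ⟨N₁, hN₁⟩ := hφ'conv b η hη
  set M := max 1 (max N₀ N₁)
  refine ⟨1 / M, by positivity, fun b' t ht htM hdist => ?_⟩
  have hMn : M ≤ ⌊1 / t⌋₊ := Nat.le_floor <| (le_one_div (by positivity) ht).2 htM.le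
  set n := ⌊1 / t⌋₊
  have htn := mem_Icc_one_div_floor_one_div ht <|
    htM.le.trans <| div_le_one_of_le₀ (by exact_mod_cast le_max_left _ _) M.cast_nonneg
  have hφφ' := hN₀ n (by omega) t htn
  rw [hstrip n (by omega) b' t htn]
  refine abs_stripWeight_mul_add_sub_lt (by omega) htn
    (hN₁ (n + 1) (by omega) b' (hdist.trans ?_)) (hN₁ n (by omega) b' (hdist.trans ?_))
  · exact_mod_cast (hφφ' _ (left_mem_Icc.2 (htn.1.trans htn.2))).le
  · exact (hφφ' _ (right_mem_Icc.2 (htn.1.trans htn.2))).le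

/-- If `(f n)` φ'-converges to `f` for a gauge `φ'` dominating the gauge `φ` in the sense
that `min_{I_n} φ' > max_{I_n} φ` for large `n` (`I_n = [1/(n+1), 1/n]`), then the
piecewise-linear interpolation `f̄(b, s/(n+1)+(1-s)/n) = s f_{n+1}(b) + (1-s) f_n(b)`
is continuous on `B × (0,1]` and has φ-boundary-limit `f`. -/
theorem interpolation_continuous_and_phi_boundary_limit
    {B : Type*} [MetricSpace B] (f : B → ℝ) (fseq : ℕ → B → ℝ)
    (φ φ' : ℝ → ℝ) (ε ε' : ℝ) (hε : 0 < ε) (hε' : 0 < ε')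
    (hφcont : ContinuousOn φ (Set.Ico 0 ε)) (hφ0 : φ 0 = 0)
    (hφnn : ∀ x ∈ Set.Ico 0 ε, 0 ≤ φ x)
    (hφ'cont : ContinuousOn φ' (Set.Ico 0 ε')) (hφ'0 : φ' 0 = 0)
    (hφ'nn : ∀ x ∈ Set.Ico 0 ε', 0 ≤ φ' x)
    (hcont : ∀ n, Continuous (fseq n))
    (hminmax : ∃ N : ℕ, ∀ n : ℕ, N ≤ n →
      ∀ t ∈ Set.Icc (1 / ((n : ℝ) + 1)) (1 / (n : ℝ)),
      ∀ t' ∈ Set.Icc (1 / ((n : ℝ) + 1)) (1 / (n : ℝ)), φ t < φ' t')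
    (hφ'conv : ∀ b : B, ∀ η : ℝ, 0 < η → ∃ N : ℕ, ∀ n : ℕ, N ≤ n →
      ∀ b' : B, dist b b' ≤ φ' (1 / n) → |fseq n b' - f b| < η)
    (fbar : B × ℝ → ℝ)
    (hinterp : ∀ b : B, ∀ n : ℕ, 1 ≤ n → ∀ s ∈ Set.Icc (0 : ℝ) 1,
      fbar (b, s / ((n : ℝ) + 1) + (1 - s) / (n : ℝ)) =
        s * fseq (n + 1) b + (1 - s) * fseq n b) :
    ContinuousOn fbar (Set.univ ×ˢ Set.Ioc (0 : ℝ) 1) ∧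
    ∀ b : B, ∀ η : ℝ, 0 < η → ∃ δ : ℝ, 0 < δ ∧ ∀ (b' : B) (t : ℝ),
      0 < t → t < δ → dist b b' ≤ φ t → |fbar (b', t) - f b| < η :=
  interpolation_continuous_and_phi_boundary_limit_general f fseq φ φ' hcont hminmax hφ'conv fbar
    hinterp
end

section
/- Let B be a subset of a metric space (B',d), given the induced metric. A function f : B → ℝ is a pointwise limit of continuous functions B → ℝ if and only if f is a pointwise limit of restrictions to B of continuous functions defined on all of B'. -/
/-!
If `f = lim gₙ` with `gₙ` continuous on `B`, then `{a < f}` and `{f < a}` are Fσ in `B`, hence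
traces on `B` of Fσ subsets of `B'`. In a perfectly normal space Fσ sets have the reduction
property, and two disjoint Fσ sets, written as increasing unions of closed sets, are told apart in
the limit by Urysohn functions separating the `n`-th pieces. This makes a "step" of `f` from level
`a'` to level `a > a'` relatively Baire-1; averages of such steps approximate a bounded `f`
uniformly, and uniform limits stay relatively Baire-1 by a dominated convergence argument for
series. The order isomorphism `ℝ ≃ (-1, 1)` reduces the general case to the bounded one.
-/

open Filter Topology Set

section Fσ

variable {X Y : Type*} [TopologicalSpace X] [TopologicalSpace Y]

def IsFσ (s : Set X) : Prop :=
  IsGδ sᶜ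

theorem IsClosed.isFσ {s : Set X} (hs : IsClosed s) : IsFσ s :=
  hs.isOpen_compl.isGδ

theorem IsOpen.isFσ [PerfectlyNormalSpace X] {s : Set X} (hs : IsOpen s) : IsFσ s :=
  hs.isClosed_compl.isGδ

theorem IsFσ.union {s t : Set X} (hs : IsFσ s) (ht : IsFσ t) : IsFσ (s ∪ t) := by
  simpa only [IsFσ, compl_union] using IsGδ.inter hs ht

theorem IsFσ.inter {s t : Set X} (hs : IsFσ s) (ht : IsFσ t) : IsFσ (s ∩ t) := by
  simpa only [IsFσ, compl_inter] using IsGδ.union hs ht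

theorem IsFσ.iUnion {ι : Sort*} [Countable ι] {s : ι → Set X} (hs : ∀ i, IsFσ (s i)) :
    IsFσ (⋃ i, s i) := by
  simpa only [IsFσ, compl_iUnion] using IsGδ.iInter hs

theorem IsFσ.exists_monotone_isClosed {s : Set X} (hs : IsFσ s) :
    ∃ W : ℕ → Set X, Monotone W ∧ (∀ n, IsClosed (W n)) ∧ ⋃ n, W n = s := by
  obtain ⟨U, hU, hsU⟩ := isGδ_iff_eq_iInter_nat.1 hs
  refine ⟨accumulate fun n => (U n)ᶜ, monotone_accumulate, fun n => ?_, ?_⟩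
  · rw [accumulate_def]
    exact (finite_Iic n).isClosed_biUnion fun i _ => (hU i).isClosed_compl
  · rw [iUnion_accumulate, ← compl_iInter, ← hsU, compl_compl]

theorem Topology.IsInducing.exists_isFσ_preimage_eq {e : Y → X} (he : IsInducing e) {s : Set Y}
    (hs : IsFσ s) : ∃ t : Set X, IsFσ t ∧ e ⁻¹' t = s := by
  obtain ⟨U, hU, hsU⟩ := isGδ_iff_eq_iInter_nat.1 hs
  choose V hV hVU using fun n => he.isOpen_iff.1 (hU n)
  refine ⟨(⋂ n, V n)ᶜ, by simpa [IsFσ] using IsGδ.iInter_of_isOpen hV, ?_⟩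
  rw [preimage_compl, preimage_iInter, ← compl_compl s, hsU]
  simp only [hVU]

theorem IsFσ.exists_reduction [PerfectlyNormalSpace X] {U V : Set X} (hU : IsFσ U) (hV : IsFσ V) :
    ∃ U₀ V₀ : Set X, IsFσ U₀ ∧ IsFσ V₀ ∧ U₀ ⊆ U ∧ V₀ ⊆ V ∧ Disjoint U₀ V₀ ∧ U ∪ V ⊆ U₀ ∪ V₀ := by
  obtain ⟨W, hWm, hWc, rfl⟩ := hU.exists_monotone_isClosed
  obtain ⟨W', hW'm, hW'c, rfl⟩ := hV.exists_monotone_isClosed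
  -- In the order `W 0, W' 0, W 1, W' 1, …`, a point goes to the side of the first piece
  -- containing it.
  refine ⟨W 0 ∪ ⋃ n, W (n + 1) \ W' n, ⋃ n, W' n \ W n, ?_, ?_, ?_,
    iUnion_mono fun n => sdiff_subset, ?_, ?_⟩
  · exact (hWc 0).isFσ.union
      (.iUnion fun n => (hWc (n + 1)).isFσ.inter (hW'c n).isOpen_compl.isFσ)
  · exact .iUnion fun n => (hW'c n).isFσ.inter (hWc n).isOpen_compl.isFσ
  · exact union_subset (subset_iUnion W 0)
      (iUnion_subset fun n => sdiff_subset.trans (subset_iUnion W (n + 1)))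
  · refine disjoint_left.2 fun x hx hx' => ?_
    obtain ⟨m, hxm, hxm'⟩ := mem_iUnion.1 hx'
    rcases hx with hx0 | hx
    · exact hxm' (hWm (Nat.zero_le m) hx0)
    · obtain ⟨n, hxn, hxn'⟩ := mem_iUnion.1 hx
      rcases le_or_gt m n with hmn | hnm
      · exact hxn' (hW'm hmn hxm)
      · exact hxm' (hWm hnm hxn)
  · intro x hx
    by_contra hx'
    obtain ⟨hxU, hxV⟩ := not_or.1 hx'
    have hout : ∀ n, x ∉ W n ∧ x ∉ W' n := by
      intro n
      induction n with
      | zero =>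
        have hW0 : x ∉ W 0 := fun h => hxU (Or.inl h)
        exact ⟨hW0, fun h => hxV (mem_iUnion.2 ⟨0, h, hW0⟩)⟩
      | succ n ih =>
        have hW : x ∉ W (n + 1) := fun h => hxU (Or.inr (mem_iUnion.2 ⟨n, h, ih.2⟩))
        exact ⟨hW, fun h => hxV (mem_iUnion.2 ⟨n + 1, h, hW⟩)⟩
    rcases hx with hx | hx <;> obtain ⟨n, hn⟩ := mem_iUnion.1 hx
    exacts [(hout n).1 hn, (hout n).2 hn]

theorem exists_tendsto_indicator_of_isFσ [NormalSpace X] {P Q : Set X} (hP : IsFσ P)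
    (hQ : IsFσ Q) (hPQ : Disjoint P Q) :
    ∃ V : ℕ → X → ℝ, (∀ n, Continuous (V n)) ∧
      ∀ x ∈ P ∪ Q, Tendsto (fun n => V n x) atTop (𝓝 (P.indicator 1 x)) := by
  obtain ⟨W, hWm, hWc, rfl⟩ := hP.exists_monotone_isClosed
  obtain ⟨W', hW'm, hW'c, rfl⟩ := hQ.exists_monotone_isClosed
  have hdisj (n : ℕ) : Disjoint (W' n) (W n) :=
    (hPQ.mono (subset_iUnion W n) (subset_iUnion W' n)).symm
  choose V hV0 hV1 _ using fun n =>
    exists_continuous_zero_one_of_isClosed (hW'c n) (hWc n) (hdisj n)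
  refine ⟨fun n => V n, fun n => (V n).continuous, fun x hx => tendsto_const_nhds.congr' ?_⟩
  rcases hx with hx | hx <;> obtain ⟨N, hN⟩ := mem_iUnion.1 hx
  · filter_upwards [eventually_ge_atTop N] with n hn
    rw [indicator_of_mem hx, hV1 n (hWm hn hN)]
  · filter_upwards [eventually_ge_atTop N] with n hn
    rw [indicator_of_notMem (hPQ.notMem_of_mem_right hx), hV0 n (hW'm hn hN)]
    rfl

end Fσ

theorem abs_sum_range_sub_le_one {x : ℕ → ℝ} {t : ℝ} {n : ℕ} (hx : ∀ i, x i ∈ Icc 0 1)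
    (hx1 : ∀ i : ℕ, (i : ℝ) + 1 ≤ t → x i = 1) (hx0 : ∀ i : ℕ, t ≤ i → x i = 0)
    (ht : t ∈ Icc 0 (n : ℝ)) : |∑ i ∈ Finset.range n, x i - t| ≤ 1 := by
  have hfloor : ∑ i ∈ Finset.range ⌊t⌋₊, x i = ⌊t⌋₊ := by
    rw [Finset.sum_congr rfl fun i hi => hx1 i ?_]
    · simp
    · have := Nat.floor_le ht.1
      have : (i : ℝ) + 1 ≤ ⌊t⌋₊ := by exact_mod_cast Finset.mem_range.1 hi
      linarith
  have hceil : ∑ i ∈ Finset.range n, x i = ∑ i ∈ Finset.range ⌈t⌉₊, x i := by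
    rw [← Finset.sum_range_add_sum_Ico _ (Nat.ceil_le.2 ht.2), add_eq_left]
    exact Finset.sum_eq_zero fun i hi =>
      hx0 i ((Nat.le_ceil t).trans (by exact_mod_cast (Finset.mem_Ico.1 hi).1))
  have hlow : (⌊t⌋₊ : ℝ) ≤ ∑ i ∈ Finset.range n, x i :=
    hfloor ▸ Finset.sum_le_sum_of_subset_of_nonneg
      (Finset.range_subset_range.2 (Nat.floor_le_of_le ht.2)) fun i _ _ => (hx i).1
  have hup : ∑ i ∈ Finset.range n, x i ≤ ⌈t⌉₊ := by
    rw [hceil]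
    simpa using Finset.sum_le_card_nsmul (Finset.range ⌈t⌉₊) x 1 fun i _ => (hx i).2
  have hfloor_gt := Nat.lt_floor_add_one t
  have hceil_lt := Nat.ceil_lt_add_one ht.1
  rw [abs_le]
  constructor <;> linarith

section BaireOne

variable {X Y : Type*} [TopologicalSpace X] [TopologicalSpace Y]

def IsBaireOne (f : Y → ℝ) : Prop :=
  ∃ g : ℕ → Y → ℝ, (∀ n, Continuous (g n)) ∧ ∀ y, Tendsto (fun n => g n y) atTop (𝓝 (f y))

def IsRelBaireOne (B : Set X) (f : B → ℝ) : Prop :=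
  ∃ G : ℕ → X → ℝ, (∀ n, Continuous (G n)) ∧ ∀ b : B, Tendsto (fun n => G n b) atTop (𝓝 (f b))

theorem IsBaireOne.comp {f : Y → ℝ} (hf : IsBaireOne f) {φ : ℝ → ℝ} (hφ : Continuous φ) :
    IsBaireOne (φ ∘ f) := by
  obtain ⟨g, hg, hgf⟩ := hf
  exact ⟨fun n => φ ∘ g n, fun n => hφ.comp (hg n), fun y => (hφ.tendsto _).comp (hgf y)⟩

theorem IsBaireOne.isFσ_setOf_lt {f : Y → ℝ} (hf : IsBaireOne f) (a : ℝ) :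
    IsFσ {y | a < f y} := by
  obtain ⟨g, hg, hgf⟩ := hf
  have hset : {y | a < f y} = ⋃ (q : ℚ) (_ : a < q) (N : ℕ), ⋂ n ≥ N, {y | (q : ℝ) ≤ g n y} := by
    ext y
    simp only [mem_ofPred_eq, mem_iUnion, mem_iInter]
    constructor
    · intro hy
      obtain ⟨q, haq, hqf⟩ := exists_rat_btwn hy
      obtain ⟨N, hN⟩ := eventually_atTop.1 ((hgf y).eventually (lt_mem_nhds hqf))
      exact ⟨q, haq, N, fun n hn => (hN n hn).le⟩
    · rintro ⟨q, haq, N, hN⟩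
      exact haq.trans_le (ge_of_tendsto (hgf y) (eventually_atTop.2 ⟨N, hN⟩))
  rw [hset]
  exact .iUnion fun q => .iUnion fun _ => .iUnion fun N =>
    (isClosed_iInter fun n => isClosed_iInter fun _ => isClosed_le continuous_const (hg n)).isFσ

theorem IsBaireOne.isFσ_setOf_gt {f : Y → ℝ} (hf : IsBaireOne f) (a : ℝ) :
    IsFσ {y | f y < a} := by
  simpa using (hf.comp continuous_neg).isFσ_setOf_lt (-a)

section Closure

variable {B : Set X}

theorem IsRelBaireOne.isBaireOne {f : B → ℝ} (hf : IsRelBaireOne B f) : IsBaireOne f := by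
  obtain ⟨G, hG, hGf⟩ := hf
  exact ⟨fun n b => G n b, fun n => (hG n).comp continuous_subtype_val, hGf⟩

theorem IsRelBaireOne.const (c : ℝ) : IsRelBaireOne B fun _ => c :=
  ⟨fun _ _ => c, fun _ => continuous_const, fun _ => tendsto_const_nhds⟩

theorem IsRelBaireOne.add {f g : B → ℝ} (hf : IsRelBaireOne B f) (hg : IsRelBaireOne B g) :
    IsRelBaireOne B (f + g) := by
  obtain ⟨F, hF, hFf⟩ := hf
  obtain ⟨G, hG, hGg⟩ := hg
  exact ⟨fun n => F n + G n, fun n => (hF n).add (hG n), fun b => (hFf b).add (hGg b)⟩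

theorem IsRelBaireOne.sub {f g : B → ℝ} (hf : IsRelBaireOne B f) (hg : IsRelBaireOne B g) :
    IsRelBaireOne B (f - g) := by
  obtain ⟨F, hF, hFf⟩ := hf
  obtain ⟨G, hG, hGg⟩ := hg
  exact ⟨fun n => F n - G n, fun n => (hF n).sub (hG n), fun b => (hFf b).sub (hGg b)⟩

theorem IsRelBaireOne.const_mul {f : B → ℝ} (hf : IsRelBaireOne B f) (c : ℝ) :
    IsRelBaireOne B fun b => c * f b := by
  obtain ⟨F, hF, hFf⟩ := hf
  exact ⟨fun n x => c * F n x, fun n => continuous_const.mul (hF n),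
    fun b => tendsto_const_nhds.mul (hFf b)⟩

theorem IsRelBaireOne.sum {ι : Type*} (s : Finset ι) {f : ι → B → ℝ}
    (hf : ∀ i, IsRelBaireOne B (f i)) : IsRelBaireOne B fun b => ∑ i ∈ s, f i b := by
  choose F hF hFf using hf
  exact ⟨fun n x => ∑ i ∈ s, F i n x, fun n => continuous_finsetSum s fun i _ => hF i n,
    fun b => tendsto_finsetSum s fun i _ => hFf i b⟩

theorem IsRelBaireOne.exists_abs_le {f : B → ℝ} (hf : IsRelBaireOne B f) {c : ℝ} (hc : 0 ≤ c)
    (hfc : ∀ b, |f b| ≤ c) :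
    ∃ G : ℕ → X → ℝ, (∀ n, Continuous (G n)) ∧ (∀ n x, |G n x| ≤ c) ∧
      ∀ b : B, Tendsto (fun n => G n b) atTop (𝓝 (f b)) := by
  obtain ⟨G, hG, hGf⟩ := hf
  have hcc : -c ≤ c := by linarith
  have hπ : Continuous fun y : ℝ => (projIcc (-c) c hcc y : ℝ) :=
    continuous_subtype_val.comp continuous_projIcc
  refine ⟨fun n x => projIcc (-c) c hcc (G n x), fun n => hπ.comp (hG n),
    fun n x => abs_le.2 (projIcc (-c) c hcc (G n x)).2, fun b => ?_⟩
  simpa [Function.comp_def, projIcc_of_mem hcc (abs_le.1 (hfc b))] using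
    (hπ.tendsto (f b)).comp (hGf b)

theorem IsRelBaireOne.exists_mem_Ioo {f : B → ℝ} (hf : IsRelBaireOne B f)
    (hf1 : ∀ b, f b ∈ Ioo (-1) 1) :
    ∃ G : ℕ → X → Ioo (-1 : ℝ) 1, (∀ n, Continuous (G n)) ∧
      ∀ b : B, Tendsto (fun n => G n b) atTop (𝓝 ⟨f b, hf1 b⟩) := by
  obtain ⟨G, hG, hG1, hGf⟩ := hf.exists_abs_le zero_le_one fun b => (abs_lt.2 (hf1 b)).le
  have hmem (n : ℕ) (x : X) : (n : ℝ) / (n + 1) * G n x ∈ Ioo (-1 : ℝ) 1 := by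
    rw [mem_Ioo, ← abs_lt, abs_mul, abs_of_nonneg (by positivity)]
    calc (n : ℝ) / (n + 1) * |G n x| ≤ n / (n + 1) :=
          mul_le_of_le_one_right (by positivity) (hG1 n x)
      _ < 1 := (div_lt_one (by positivity)).2 (lt_add_one _)
  refine ⟨fun n x => ⟨_, hmem n x⟩, fun n => (continuous_const.mul (hG n)).subtype_mk _,
    fun b => tendsto_subtype_rng.2 ?_⟩
  simpa using (tendsto_natCast_div_add_atTop (1 : ℝ)).mul (hGf b)

theorem IsRelBaireOne.tsum {d : ℕ → B → ℝ} (hd : ∀ m, IsRelBaireOne B (d m)) {c : ℕ → ℝ}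
    (hc : Summable c) (hdc : ∀ m b, |d m b| ≤ c m) :
    IsRelBaireOne B fun b => ∑' m, d m b := by
  choose D hD hDc hDd using fun m =>
    (hd m).exists_abs_le (abs_nonneg (c m)) fun b => (hdc m b).trans (le_abs_self _)
  refine ⟨fun n x => ∑' m, D m n x,
    fun n => continuous_tsum (fun m => hD m n) hc.abs fun m x => hDc m n x, fun b => ?_⟩
  exact tendsto_tsum_of_dominated_convergence hc.abs (fun m => hDd m b)
    (.of_forall fun n m => hDc m n b)

theorem IsRelBaireOne.of_abs_sub_le {f : B → ℝ} {h : ℕ → B → ℝ}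
    (hh : ∀ m, IsRelBaireOne B (h m)) {ε : ℕ → ℝ} (hε : Summable ε)
    (hhf : ∀ m b, |h m b - f b| ≤ ε m) : IsRelBaireOne B f := by
  have hdiff (m : ℕ) (b : B) : |h (m + 1) b - h m b| ≤ ε (m + 1) + ε m :=
    calc |h (m + 1) b - h m b| = |(h (m + 1) b - f b) - (h m b - f b)| := by ring_nf
      _ ≤ |h (m + 1) b - f b| + |h m b - f b| := abs_sub _ _
      _ ≤ ε (m + 1) + ε m := add_le_add (hhf _ b) (hhf m b)
  have hbound : Summable fun m => ε (m + 1) + ε m := ((summable_nat_add_iff 1).2 hε).add hε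
  have htel (b : B) : HasSum (fun m => h (m + 1) b - h m b) (f b - h 0 b) := by
    refine (Summable.of_norm_bounded hbound (hdiff · b)).hasSum_iff_tendsto_nat.2 ?_
    simp_rw [Finset.sum_range_sub fun m => h m b]
    refine Tendsto.sub ?_ tendsto_const_nhds
    exact tendsto_iff_norm_sub_tendsto_zero.2
      (squeeze_zero (fun _ => norm_nonneg _) (fun m => hhf m b) hε.tendsto_atTop_zero)
  have hf : f = h 0 + fun b => ∑' m, (h (m + 1) b - h m b) :=
    funext fun b => by simp [(htel b).tsum_eq]
  rw [hf]
  exact (hh 0).add (.tsum (fun m => (hh (m + 1)).sub (hh m)) hbound hdiff)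

end Closure

variable [PerfectlyNormalSpace X] {B : Set X}

theorem IsBaireOne.exists_isRelBaireOne_step {f : B → ℝ} (hf : IsBaireOne f) {a' a : ℝ}
    (ha : a' < a) :
    ∃ χ : B → ℝ, IsRelBaireOne B χ ∧ (∀ b, χ b ∈ Icc 0 1) ∧ (∀ b, a ≤ f b → χ b = 1) ∧
      ∀ b, f b ≤ a' → χ b = 0 := by
  obtain ⟨U, hU, hUf⟩ := IsInducing.subtypeVal.exists_isFσ_preimage_eq (hf.isFσ_setOf_lt a')
  obtain ⟨V, hV, hVf⟩ := IsInducing.subtypeVal.exists_isFσ_preimage_eq (hf.isFσ_setOf_gt a)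
  obtain ⟨P, Q, hP, hQ, hPU, hQV, hPQ, hUV⟩ := hU.exists_reduction hV
  obtain ⟨G, hG, hGP⟩ := exists_tendsto_indicator_of_isFσ hP hQ hPQ
  have hmemU (b : B) : (b : X) ∈ U ↔ a' < f b := Set.ext_iff.1 hUf b
  have hmemV (b : B) : (b : X) ∈ V ↔ f b < a := Set.ext_iff.1 hVf b
  have hPQB (b : B) : (b : X) ∈ P ∪ Q := by
    refine hUV ?_
    rcases lt_or_ge a' (f b) with h | h
    exacts [Or.inl ((hmemU b).2 h), Or.inr ((hmemV b).2 (h.trans_lt ha))]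
  refine ⟨fun b => P.indicator 1 b, ⟨G, hG, fun b => hGP b (hPQB b)⟩, fun b => ?_, fun b hb => ?_,
    fun b hb => indicator_of_notMem (fun h => hb.not_gt ((hmemU b).1 (hPU h))) _⟩
  · by_cases h : (b : X) ∈ P <;> simp [h]
  · refine indicator_of_mem ((hPQB b).resolve_right fun h => ?_) _
    exact hb.not_gt ((hmemV b).1 (hQV h))

theorem IsBaireOne.isRelBaireOne_of_mem_Icc {f : B → ℝ} (hf : IsBaireOne f)
    (hf1 : ∀ b, f b ∈ Icc (-1) 1) : IsRelBaireOne B f := by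
  -- Summing the steps of `2 ^ m * (f + 1)` across the unit intervals `[i, i + 1]` recovers that
  -- function up to an error `1`.
  choose χ hχ hχ01 hχ1 hχ0 using fun (m i : ℕ) =>
    (hf.comp (φ := fun t => 2 ^ m * (t + 1)) (by fun_prop)).exists_isRelBaireOne_step
      (a' := i) (a := i + 1) (lt_add_one _)
  refine .of_abs_sub_le (h := fun m b => (2 ^ m)⁻¹ * ∑ i ∈ Finset.range (2 * 2 ^ m), χ m i b - 1)
    (fun m => ((IsRelBaireOne.sum _ (hχ m)).const_mul _).sub (.const 1))
    summable_geometric_two fun m b => ?_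
  have hcount := abs_sum_range_sub_le_one (hχ01 m · b) (hχ1 m · b) (hχ0 m · b)
    (t := 2 ^ m * (f b + 1)) (n := 2 * 2 ^ m) (by
      push_cast
      constructor <;> nlinarith [(hf1 b).1, (hf1 b).2, pow_pos (two_pos (α := ℝ)) m])
  calc |(2 ^ m)⁻¹ * ∑ i ∈ Finset.range (2 * 2 ^ m), χ m i b - 1 - f b|
      = |(2 ^ m)⁻¹ * (∑ i ∈ Finset.range (2 * 2 ^ m), χ m i b - 2 ^ m * (f b + 1))| := by
        congr 1
        field_simp
        ring
    _ = (2 ^ m)⁻¹ * |∑ i ∈ Finset.range (2 * 2 ^ m), χ m i b - 2 ^ m * (f b + 1)| := by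
        rw [abs_mul, abs_of_pos (by positivity)]
    _ ≤ (2 ^ m)⁻¹ := mul_le_of_le_one_right (by positivity) hcount
    _ = (1 / 2) ^ m := by rw [one_div, inv_pow]

theorem IsBaireOne.isRelBaireOne {f : B → ℝ} (hf : IsBaireOne f) : IsRelBaireOne B f := by
  let e := (orderIsoIooNegOneOne ℝ).toHomeomorph
  have hu : IsRelBaireOne B fun b => (e (f b) : ℝ) :=
    (hf.comp (continuous_subtype_val.comp e.continuous)).isRelBaireOne_of_mem_Icc
      fun b => Ioo_subset_Icc_self (e (f b)).2
  obtain ⟨G, hG, hGf⟩ := hu.exists_mem_Ioo fun b => (e (f b)).2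
  refine ⟨fun n x => e.symm (G n x), fun n => e.symm.continuous.comp (hG n), fun b => ?_⟩
  simpa [Function.comp_def] using (e.symm.continuous.tendsto _).comp (hGf b)

end BaireOne

/-- For `B ⊆ B'` with the induced metric, `f : B → ℝ` is a pointwise limit of continuous
functions on `B` iff it is a pointwise limit of restrictions of continuous functions on `B'`. -/
theorem pointwise_limit_iff_relative_pointwise_limit
    {B' : Type*} [MetricSpace B'] (B : Set B') (f : B → ℝ) :
    (∃ g : ℕ → B → ℝ, (∀ n, Continuous (g n)) ∧
      ∀ b : B, Tendsto (fun n => g n b) atTop (nhds (f b))) ↔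
    (∃ G : ℕ → B' → ℝ, (∀ n, Continuous (G n)) ∧
      ∀ b : B, Tendsto (fun n => G n (b : B')) atTop (nhds (f b))) :=
  ⟨IsBaireOne.isRelBaireOne, IsRelBaireOne.isBaireOne⟩
end

section
/- Every ℤ-valued Baire-1 function on a metric space is, when regarded as ℝ-valued, a pointwise limit of a sequence of Lipschitz real-valued functions. -/
/-!
Each fibre `f ⁻¹' {k}` is the preimage of the open ball of radius `1/2` about `k`, hence `F_σ`,
so `B` is covered by countably many closed sets `C₀, C₁, …` on each of which `f` is constant.
Let `φₙ,ᵢ` be the Lipschitz bump equal to `1` on `Cᵢ` and vanishing off its `1/(n+1)`-thickening.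
The products `φₙ,ᵢ ∏_{j<i} (1 - φₙ,ⱼ)` are Lipschitz weights giving priority to small indices:
if `Cᵢ₀` is the first set containing `x`, then for large `n` the bumps of the earlier, closed,
sets vanish at `x`, so all the weight at `x` sits on `i₀` and the weighted sum of the values
of `f` on the `Cᵢ`, `i < n`, is exactly `f x`.
-/
open Filter Topology Set
open scoped NNReal

section Lipschitz

variable {α ι : Type*} [PseudoMetricSpace α]

theorem LipschitzWith.finset_sum {E : Type*} [SeminormedAddCommGroup E] (s : Finset ι)
    {f : ι → α → E} {K : ι → ℝ≥0} (hf : ∀ i ∈ s, LipschitzWith (K i) (f i)) :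
    LipschitzWith (∑ i ∈ s, K i) fun x => ∑ i ∈ s, f i x :=
  LipschitzWith.of_dist_le_mul fun x y => by
    rw [NNReal.coe_sum, Finset.sum_mul]
    exact dist_sum_sum_le_of_le s fun i hi => (hf i hi).dist_le_mul x y

theorem LipschitzWith.mul_of_norm_le_one {R : Type*} [NonUnitalSeminormedRing R]
    {f g : α → R} {Kf Kg : ℝ≥0} (hf : LipschitzWith Kf f) (hg : LipschitzWith Kg g)
    (hf₁ : ∀ x, ‖f x‖ ≤ 1) (hg₁ : ∀ x, ‖g x‖ ≤ 1) :
    LipschitzWith (Kf + Kg) fun x => f x * g x :=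
  LipschitzWith.of_dist_le_mul fun x y => by
    rw [dist_eq_norm, show f x * g x - f y * g y = f x * (g x - g y) + (f x - f y) * g y by
      noncomm_ring]
    calc ‖f x * (g x - g y) + (f x - f y) * g y‖
        ≤ ‖f x‖ * ‖g x - g y‖ + ‖f x - f y‖ * ‖g y‖ :=
          (norm_add_le _ _).trans (add_le_add (norm_mul_le _ _) (norm_mul_le _ _))
      _ ≤ 1 * (Kg * dist x y) + Kf * dist x y * 1 := by
          rw [← dist_eq_norm, ← dist_eq_norm]
          gcongr
          exacts [hf₁ x, hg.dist_le_mul x y, hf.dist_le_mul x y, hg₁ y]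
      _ = (Kf + Kg : ℝ≥0) * dist x y := by push_cast; ring

theorem Finset.norm_prod_le_one {ι R : Type*} [NormedCommRing R] [NormOneClass R] (s : Finset ι)
    {f : ι → R} (hf : ∀ i ∈ s, ‖f i‖ ≤ 1) : ‖∏ i ∈ s, f i‖ ≤ 1 :=
  (s.norm_prod_le f).trans (Finset.prod_le_one (fun _ _ => norm_nonneg _) hf)

theorem LipschitzWith.finset_prod_of_norm_le_one {R : Type*} [NormedCommRing R] [NormOneClass R]
    (s : Finset ι) {f : ι → α → R} {K : ι → ℝ≥0} (hf : ∀ i ∈ s, LipschitzWith (K i) (f i))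
    (hf₁ : ∀ i ∈ s, ∀ x, ‖f i x‖ ≤ 1) :
    LipschitzWith (∑ i ∈ s, K i) fun x => ∏ i ∈ s, f i x := by
  classical
  induction s using Finset.induction_on with
  | empty => simp
  | insert i s hi ih =>
    simp only [Finset.sum_insert hi, Finset.prod_insert hi]
    refine (hf i (s.mem_insert_self i)).mul_of_norm_le_one
      (ih (fun j hj => hf j (s.mem_insert_of_mem hj)) fun j hj => hf₁ j (s.mem_insert_of_mem hj))
      (hf₁ i (s.mem_insert_self i)) fun x =>
        s.norm_prod_le_one fun j hj => hf₁ j (s.mem_insert_of_mem hj) x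

end Lipschitz

section FirstHit

variable {α : Type*}

def firstHitWeight (φ : ℕ → α → ℝ) (i : ℕ) (x : α) : ℝ :=
  φ i x * ∏ j ∈ Finset.range i, (1 - φ j x)

theorem firstHitWeight_eq_ite {φ : ℕ → α → ℝ} {x : α} {i₀ : ℕ} (h₀ : ∀ j < i₀, φ j x = 0)
    (h₁ : φ i₀ x = 1) (i : ℕ) : firstHitWeight φ i x = if i = i₀ then 1 else 0 := by
  unfold firstHitWeight
  rcases lt_trichotomy i i₀ with hi | rfl | hi
  · simp [h₀ i hi, hi.ne]
  · rw [h₁, Finset.prod_eq_one fun j hj => by rw [h₀ j (Finset.mem_range.mp hj), sub_zero]]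
    simp
  · rw [Finset.prod_eq_zero (f := fun j => 1 - φ j x) (Finset.mem_range.mpr hi)
      (sub_eq_zero.mpr h₁.symm)]
    simp [hi.ne']

theorem lipschitzWith_firstHitWeight [PseudoMetricSpace α] {φ : ℕ → α → ℝ} {K : ℝ≥0}
    (hφ : ∀ j, LipschitzWith K (φ j)) (hφ₀ : ∀ j x, 0 ≤ φ j x) (hφ₁ : ∀ j x, φ j x ≤ 1) (i : ℕ) :
    LipschitzWith (K + ∑ _j ∈ Finset.range i, K) (firstHitWeight φ i) := by
  have norm_le_one : ∀ j x, ‖φ j x‖ ≤ 1 := fun j x =>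
    abs_le.mpr ⟨by linarith [hφ₀ j x], hφ₁ j x⟩
  have norm_one_sub_le_one : ∀ j x, ‖1 - φ j x‖ ≤ 1 := fun j x =>
    abs_le.mpr ⟨by linarith [hφ₁ j x], by linarith [hφ₀ j x]⟩
  refine (hφ i).mul_of_norm_le_one
    (LipschitzWith.finset_prod_of_norm_le_one _ (fun j _ => ?_) fun j _ => norm_one_sub_le_one j)
    (norm_le_one i) fun x => Finset.norm_prod_le_one _ fun j _ => norm_one_sub_le_one j x
  simpa using (LipschitzWith.const (1 : ℝ)).sub (hφ j)

end FirstHit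

theorem eventually_thickenedIndicator_eq_zero {α : Type*} [PseudoEMetricSpace α] {C : Set α}
    {x : α} (hx : x ∉ closure C) :
    ∀ᶠ n : ℕ in atTop, thickenedIndicator (Nat.one_div_pos_of_nat (n := n)) C x = 0 :=
  (tendsto_one_div_add_atTop_nhds_zero_nat.eventually
    (Metric.eventually_notMem_thickening_of_infEDist_pos hx)).mono fun _ hn =>
      thickenedIndicator_zero _ _ hn

theorem exists_lipschitz_tendsto_of_isClosed_cover {α E : Type*} [PseudoMetricSpace α]
    [SeminormedAddCommGroup E] [NormedSpace ℝ E] {C : ℕ → Set α} (hC : ∀ i, IsClosed (C i))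
    (hcover : ⋃ i, C i = univ) {f : α → E} {c : ℕ → E} (hfc : ∀ i, ∀ x ∈ C i, f x = c i) :
    ∃ g : ℕ → α → E, (∀ n, ∃ K : ℝ≥0, LipschitzWith K (g n)) ∧
      ∀ x, Tendsto (fun n => g n x) atTop (𝓝 (f x)) := by
  set φ : ℕ → ℕ → α → ℝ := fun n i x => thickenedIndicator (Nat.one_div_pos_of_nat (n := n)) (C i) x
  refine ⟨fun n x => ∑ i ∈ Finset.range n, firstHitWeight (φ n) i x • c i, fun n => ?_, fun x => ?_⟩
  · have hφ : ∀ i, LipschitzWith _ (φ n i) := fun i =>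
      NNReal.isometry_coe.lipschitz.comp (lipschitzWith_thickenedIndicator _ (C i))
    exact ⟨_, LipschitzWith.finset_sum _ fun i _ =>
      (ContinuousLinearMap.toSpanSingleton ℝ (c i)).lipschitz.comp
        (lipschitzWith_firstHitWeight hφ (fun _ _ => NNReal.coe_nonneg _)
          (fun _ _ => thickenedIndicator_le_one _ _ _) i)⟩
  · classical
    have hx : ∃ i, x ∈ C i := mem_iUnion.mp (hcover ▸ mem_univ x)
    set i₀ := Nat.find hx
    have hhit : ∀ n, φ n i₀ x = 1 := fun n => by
      simp only [φ]
      rw [thickenedIndicator_one _ _ (Nat.find_spec hx), NNReal.coe_one]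
    have hmiss : ∀ᶠ n in atTop, ∀ j < i₀, φ n j x = 0 := by
      refine (eventually_all_finite (finite_lt_nat i₀)).mpr fun j hj => ?_
      have : x ∉ closure (C j) := by rw [(hC j).closure_eq]; exact Nat.find_min hx hj
      simpa [φ] using eventually_thickenedIndicator_eq_zero this
    refine tendsto_const_nhds.congr' ?_
    filter_upwards [hmiss, eventually_gt_atTop i₀] with n hn hi₀
    simp [firstHitWeight_eq_ite hn (hhit n), hi₀, hfc i₀ x (Nat.find_spec hx)]

theorem exists_isClosed_cover_of_fibers {B ι : Type*} [TopologicalSpace B] [Countable ι]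
    [Nonempty ι] {f : B → ι}
    (hf : ∀ k, ∃ F : ℕ → Set B, (∀ m, IsClosed (F m)) ∧ f ⁻¹' {k} = ⋃ m, F m) :
    ∃ (C : ℕ → Set B) (L : ℕ → ι), (∀ i, IsClosed (C i)) ∧ ⋃ i, C i = univ ∧
      ∀ i, ∀ x ∈ C i, f x = L i := by
  choose F hFc hF using hf
  obtain ⟨e, he⟩ := exists_surjective_nat (ι × ℕ)
  refine ⟨fun i => F (e i).1 (e i).2, fun i => (e i).1, fun i => hFc _ _, ?_, fun i x hx => ?_⟩
  · refine eq_univ_of_forall fun x => ?_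
    have hx : x ∈ ⋃ m, F (f x) m := by rw [← hF]; rfl
    obtain ⟨m, hm⟩ := mem_iUnion.mp hx
    obtain ⟨i, hi⟩ := he (f x, m)
    exact mem_iUnion.mpr ⟨i, by rwa [hi]⟩
  · exact (hF _).symm.subset (mem_iUnion_of_mem _ hx)

theorem Int.cast_preimage_ball_half (k : ℤ) :
    ((↑) : ℤ → ℝ) ⁻¹' Metric.ball (k : ℝ) (1 / 2) = {k} := by
  ext z
  simp only [mem_preimage, Metric.mem_ball, Int.dist_cast_real, mem_singleton_iff]
  refine ⟨fun h => by_contra fun hzk => ?_, fun h => by simp [h]⟩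
  linarith [Int.pairwise_one_le_dist hzk]

/-- Every `ℤ`-valued Baire-1 function on a metric space (preimages of open sets are Fσ)
is, as an `ℝ`-valued function, a pointwise limit of a sequence of Lipschitz functions. -/
theorem int_valued_baire_one_is_pointwise_limit_of_lipschitz
    {B : Type*} [MetricSpace B] (f : B → ℤ)
    (h : ∀ U : Set ℝ, IsOpen U → ∃ F : ℕ → Set B, (∀ n, IsClosed (F n)) ∧
      (fun b => (f b : ℝ)) ⁻¹' U = ⋃ n, F n) :
    ∃ g : ℕ → B → ℝ, (∀ n, ∃ K : NNReal, LipschitzWith K (g n)) ∧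
      ∀ b : B, Tendsto (fun n => g n b) atTop (nhds ((f b : ℝ))) := by
  have hfibers : ∀ k : ℤ, ∃ F : ℕ → Set B, (∀ m, IsClosed (F m)) ∧ f ⁻¹' {k} = ⋃ m, F m :=
    fun k => by
      obtain ⟨F, hF, hpre⟩ := h _ (Metric.isOpen_ball (x := (k : ℝ)) (ε := 1 / 2))
      exact ⟨F, hF, by rw [← Int.cast_preimage_ball_half, ← preimage_comp]; exact hpre⟩
  obtain ⟨C, L, hC, hcover, hCL⟩ := exists_isClosed_cover_of_fibers hfibers
  exact exists_lipschitz_tendsto_of_isClosed_cover hC hcover (c := fun i => (L i : ℝ))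
    fun i x hx => congrArg _ (hCL i x hx)
end
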